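/- Let (X, d) be a compact metric space and let f : X → X be a homeomorphism satisfying the specification property. Let p, q ∈ X be fixed points of f such that: (i) there exists ε_1 > 0 so that every y with d(f^{-n}(y), p) ≤ ε_1 for all n ≥ 0 satisfies d(f^{-n}(y), p) → 0 as n → ∞; and (ii) there exists ε_2 > 0 so that every y with d(f^{n}(y), q) ≤ ε_2 for all n ≥ 0 satisfies d(f^{n}(y), q) → 0 as n → ∞. Then the unstable set of p meets the stable set of q: there exists z ∈ X with d(f^{-n}(z), p) → 0 and d(f^{n}(z), q) → 0 as n → ∞. -/

import Mathlib

/-!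
By specification, for every `M` some point stays `ε`-close to `p` during `[-M, 0]` and to `q`
during `[N, N + M]`, with `N` depending only on `ε`. By compactness these points give one point
`z` that is `ε`-close to `p` over its whole past and to `q` from time `N` on. For
`ε ≤ min ε₁ ε₂` the local hypotheses then put `z` in `Wᵘ(p)` and `f^N z`, hence `z`, in `Wˢ(q)`.
-/

open Filter Topology

/-- The specification property for a homeomorphism `f` of a metric space. -/
def SpecProp {X : Type*} [MetricSpace X] (f : X ≃ₜ X) : Prop :=
  ∀ ε : ℝ, 0 < ε → ∃ N : ℕ, 0 < N ∧
    ∀ (k : ℕ) (m n : ℕ → ℤ) (xs : ℕ → X),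
      (∀ j < k, m j ≤ n j) →
      (∀ i < k, ∀ j < k, i ≠ j →
        ∀ a ∈ Set.Icc (m i) (n i), ∀ b ∈ Set.Icc (m j) (n j), (N : ℤ) ≤ |a - b|) →
      ∃ x : X, ∀ j < k, ∀ i ∈ Set.Icc (m j) (n j),
        dist ((f.toEquiv ^ i) x) ((f.toEquiv ^ i) (xs j)) ≤ ε

open Set

theorem Homeomorph.toEquiv_zpow {X : Type*} [TopologicalSpace X] (f : X ≃ₜ X) (i : ℤ) :
    (f ^ i).toEquiv = f.toEquiv ^ i :=
  map_zpow ({ toFun := Homeomorph.toEquiv, map_one' := rfl, map_mul' := fun _ _ => rfl } :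
    (X ≃ₜ X) →* Equiv.Perm X) f i

theorem Homeomorph.continuous_toEquiv_zpow {X : Type*} [TopologicalSpace X] (f : X ≃ₜ X)
    (i : ℤ) : Continuous (f.toEquiv ^ i) := by
  rw [← f.toEquiv_zpow]
  exact (f ^ i).continuous

theorem Equiv.Perm.tendsto_comp_zpow_apply_zpow_iff {X α : Type*} (g : Equiv.Perm X)
    (u : X → α) (l : Filter α) (N : ℕ) (x : X) :
    Tendsto (fun n : ℕ => u ((g ^ (n : ℤ)) ((g ^ (N : ℤ)) x))) atTop l ↔
      Tendsto (fun n : ℕ => u ((g ^ (n : ℤ)) x)) atTop l := by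
  simp_rw [← Equiv.Perm.mul_apply, ← zpow_add, ← Nat.cast_add]
  exact tendsto_add_atTop_iff_nat (f := fun n : ℕ => u ((g ^ (n : ℤ)) x)) N

namespace SpecProp

variable {X : Type*} [MetricSpace X] {f : X ≃ₜ X}

theorem exists_shadow_two_segments (hf : SpecProp f) {ε : ℝ} (hε : 0 < ε) :
    ∃ N : ℕ, ∀ (a b : X) (m₁ n₁ m₂ n₂ : ℤ), m₁ ≤ n₁ → n₁ + N ≤ m₂ → m₂ ≤ n₂ →
      ∃ x : X, (∀ i ∈ Icc m₁ n₁, dist ((f.toEquiv ^ i) x) ((f.toEquiv ^ i) a) ≤ ε) ∧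
        ∀ i ∈ Icc m₂ n₂, dist ((f.toEquiv ^ i) x) ((f.toEquiv ^ i) b) ≤ ε := by
  obtain ⟨N, -, hN⟩ := hf ε hε
  refine ⟨N, fun a b m₁ n₁ m₂ n₂ h₁ hgap h₂ => ?_⟩
  have hsep : ∀ s ∈ Icc m₁ n₁, ∀ t ∈ Icc m₂ n₂, (N : ℤ) ≤ |s - t| := by
    rintro s ⟨-, hs⟩ t ⟨ht, -⟩
    rw [abs_sub_comm]
    exact le_abs.mpr (Or.inl (by omega))
  obtain ⟨x, hx⟩ := hN 2 (fun j => if j = 0 then m₁ else m₂) (fun j => if j = 0 then n₁ else n₂)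
    (fun j => if j = 0 then a else b)
    (by intro j hj; interval_cases j <;> simpa)
    (by
      intro i hi j hj hij s hs t ht
      interval_cases i <;> interval_cases j
      · exact absurd rfl hij
      · exact hsep s hs t ht
      · exact abs_sub_comm s t ▸ hsep t ht s hs
      · exact absurd rfl hij)
  exact ⟨x, fun i hi => by simpa using hx 0 (by norm_num) i (by simpa using hi),
    fun i hi => by simpa using hx 1 (by norm_num) i (by simpa using hi)⟩

theorem exists_shadow_past_future [CompactSpace X] (hf : SpecProp f) {ε : ℝ} (hε : 0 < ε) :
    ∃ N : ℕ, ∀ a b : X, ∃ z : X,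
      (∀ i : ℤ, i ≤ 0 → dist ((f.toEquiv ^ i) z) ((f.toEquiv ^ i) a) ≤ ε) ∧
        ∀ i : ℤ, (N : ℤ) ≤ i → dist ((f.toEquiv ^ i) z) ((f.toEquiv ^ i) b) ≤ ε := by
  obtain ⟨N, hN⟩ := hf.exists_shadow_two_segments hε
  refine ⟨N, fun a b => ?_⟩
  let near (c : X) (i : ℤ) : Set X := {x | dist ((f.toEquiv ^ i) x) ((f.toEquiv ^ i) c) ≤ ε}
  have near_closed (c : X) (i : ℤ) : IsClosed (near c i) :=
    isClosed_le ((f.continuous_toEquiv_zpow i).dist continuous_const) continuous_const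
  let t (M : ℕ) : Set X :=
    (⋂ i ∈ Icc (-(M : ℤ)) 0, near a i) ∩ ⋂ i ∈ Icc (N : ℤ) (N + M), near b i
  have t_nonempty (M : ℕ) : (t M).Nonempty := by
    obtain ⟨x, hxa, hxb⟩ := hN a b (-(M : ℤ)) 0 N (N + M) (by omega) (by omega) (by omega)
    exact ⟨x, mem_iInter₂.mpr hxa, mem_iInter₂.mpr hxb⟩
  have t_antitone (M : ℕ) : t (M + 1) ⊆ t M :=
    inter_subset_inter (biInter_subset_biInter_left (Icc_subset_Icc (by omega) le_rfl))
      (biInter_subset_biInter_left (Icc_subset_Icc le_rfl (by omega)))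
  have t_closed (M : ℕ) : IsClosed (t M) :=
    (isClosed_biInter fun i _ => near_closed a i).inter
      (isClosed_biInter fun i _ => near_closed b i)
  obtain ⟨z, hz⟩ := IsCompact.nonempty_iInter_of_sequence_nonempty_isCompact_isClosed t
    t_antitone t_nonempty (t_closed 0).isCompact t_closed
  rw [mem_iInter] at hz
  refine ⟨z, fun i hi => ?_, fun i hi => ?_⟩
  · exact mem_iInter₂.mp (hz i.natAbs).1 i ⟨by omega, hi⟩
  · exact mem_iInter₂.mp (hz i.natAbs).2 i ⟨hi, by omega⟩

end SpecProp

/-- if `f` satisfies the specification property, `p` and `q` are fixed points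
whose local unstable (resp. stable) sets are contained in their unstable (resp. stable) sets,
then the unstable set of `p` meets the stable set of `q`. -/
theorem unstable_meets_stable {X : Type*} [MetricSpace X] [CompactSpace X]
    (f : X ≃ₜ X) (hf : SpecProp f) (p q : X) (hp : f p = p) (hq : f q = q)
    (hlocu : ∃ ε₁ : ℝ, 0 < ε₁ ∧ ∀ y : X,
      (∀ n : ℕ, dist ((f.toEquiv ^ (-(n : ℤ))) y) p ≤ ε₁) →
      Tendsto (fun n : ℕ => dist ((f.toEquiv ^ (-(n : ℤ))) y) p) atTop (nhds 0))
    (hlocs : ∃ ε₂ : ℝ, 0 < ε₂ ∧ ∀ y : X,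
      (∀ n : ℕ, dist ((f.toEquiv ^ (n : ℤ)) y) q ≤ ε₂) →
      Tendsto (fun n : ℕ => dist ((f.toEquiv ^ (n : ℤ)) y) q) atTop (nhds 0)) :
    ∃ z : X,
      Tendsto (fun n : ℕ => dist ((f.toEquiv ^ (-(n : ℤ))) z) p) atTop (nhds 0) ∧
      Tendsto (fun n : ℕ => dist ((f.toEquiv ^ (n : ℤ)) z) q) atTop (nhds 0) := by
  obtain ⟨ε₁, hε₁, hu⟩ := hlocu
  obtain ⟨ε₂, hε₂, hs⟩ := hlocs
  obtain ⟨N, hN⟩ := hf.exists_shadow_past_future (lt_min hε₁ hε₂)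
  obtain ⟨z, hpast, hfuture⟩ := hN p q
  simp only [Equiv.Perm.zpow_apply_eq_self_of_apply_eq_self (f := f.toEquiv) hp,
    Equiv.Perm.zpow_apply_eq_self_of_apply_eq_self (f := f.toEquiv) hq] at hpast hfuture
  refine ⟨z, hu z fun n => (hpast _ (by omega)).trans (min_le_left _ _), ?_⟩
  rw [← Equiv.Perm.tendsto_comp_zpow_apply_zpow_iff _ (dist · q) _ N]
  refine hs _ fun n => ?_
  rw [← Equiv.Perm.mul_apply, ← zpow_add]
  exact (hfuture _ (by omega)).trans (min_le_right _ _)
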